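/- arXiv:2202.06232 — 5 statements merged into one kernel-verified Lean document; each statement's English description precedes it below -/
import Mathlib

section
/- Let H be a real Hilbert space, U ⊆ ℝᵏ open, φ : U → H Fréchet differentiable at w ∈ U with injective differential Dφ(w), and F : H → ℝ Fréchet differentiable at φ(w) with gradient ∇F(φ(w)) ∈ H. Set b_i = Dφ(w)(e_i) for the standard basis e₁,…,e_k of ℝᵏ, let g̃ be the k×k pullback metric matrix g̃_{ij} = ⟨b_i, b_j⟩_H, and let F̃ = F ∘ φ. Then Dφ(w) applied to the natural gradient vector Σ_{i,j} (g̃⁻¹)_{ij} ∂_i F̃(w) e_j ∈ ℝᵏ equals the orthogonal projection of ∇F(φ(w)) onto the subspace span{b₁,…,b_k} = range Dφ(w). -/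
open scoped RealInnerProductSpace InnerProductSpace

open Matrix Submodule

/-!
The orthogonal projection of `x` onto `span {b₁, …, b_k}` is `∑ j, c j • b j`, where `c` solves
the normal equations `g̃ c = (⟪b i, x⟫)ᵢ`, i.e. `c = g̃⁻¹ (⟪b i, x⟫)ᵢ`. By the chain rule
`∂ᵢ F̃(w) = ⟪∇F(φ w), b i⟫`, so the natural-gradient coefficients are exactly these `c`, and
`Dφ` maps `eⱼ` to `b j`. Injectivity of `Dφ` makes the `b i` independent, so `g̃` is invertible.
-/

theorem starProjection_span_range_eq_sum_of_gram_mulVec {𝕜 E ι : Type*} [RCLike 𝕜]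
    [NormedAddCommGroup E] [InnerProductSpace 𝕜 E] [Fintype ι] {b : ι → E}
    [(span 𝕜 (Set.range b)).HasOrthogonalProjection] {x : E} {c : ι → 𝕜}
    (hc : gram 𝕜 b *ᵥ c = fun i ↦ ⟪b i, x⟫_𝕜) :
    (span 𝕜 (Set.range b)).starProjection x = ∑ j, c j • b j := by
  have hnormal (l : ι) : ⟪b l, ∑ j, c j • b j⟫_𝕜 = ⟪b l, x⟫_𝕜 := by
    calc ⟪b l, ∑ j, c j • b j⟫_𝕜 = (gram 𝕜 b *ᵥ c) l := by
          simp only [inner_sum, inner_smul_right, mulVec, dotProduct, gram_apply, mul_comm]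
      _ = ⟪b l, x⟫_𝕜 := by rw [hc]
  have hmem : ∑ j, c j • b j ∈ span 𝕜 (Set.range b) :=
    sum_mem fun j _ ↦ smul_mem _ _ (subset_span (Set.mem_range_self j))
  have hortho : span 𝕜 (Set.range b) ⟂ (𝕜 ∙ (x - ∑ j, c j • b j)) := by
    refine isOrtho_span.2 ?_
    rintro _ ⟨l, rfl⟩ _ rfl
    rw [inner_sub_right, hnormal, sub_self]
  exact eq_starProjection_of_mem_orthogonal hmem
    (isOrtho_iff_le.1 hortho.symm (mem_span_singleton_self _))

theorem starProjection_span_range_eq_sum_sum_gram_inv {E ι : Type*} [NormedAddCommGroup E]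
    [InnerProductSpace ℝ E] [Fintype ι] [DecidableEq ι] {b : ι → E}
    (hb : LinearIndependent ℝ b) [(span ℝ (Set.range b)).HasOrthogonalProjection] (x : E) :
    (span ℝ (Set.range b)).starProjection x
      = ∑ i, ∑ j, ((gram ℝ b)⁻¹ i j * ⟪x, b i⟫) • b j := by
  have hdet : IsUnit (gram ℝ b).det :=
    (det_gram_ne_zero_iff_linearIndependent.2 hb).isUnit
  have hsymm (i j : ι) : (gram ℝ b)⁻¹ j i = (gram ℝ b)⁻¹ i j :=
    (isHermitian_gram ℝ b).inv.apply i j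
  rw [starProjection_span_range_eq_sum_of_gram_mulVec (c := (gram ℝ b)⁻¹ *ᵥ fun i ↦ ⟪b i, x⟫)
    (by rw [mulVec_mulVec, mul_nonsing_inv _ hdet, one_mulVec])]
  simp only [mulVec, dotProduct, Finset.sum_smul]
  rw [Finset.sum_comm]
  refine Finset.sum_congr rfl fun i _ ↦ Finset.sum_congr rfl fun j _ ↦ ?_
  rw [hsymm, real_inner_comm]

theorem fderiv_comp_apply_eq_inner_gradient {E H : Type*} [NormedAddCommGroup E]
    [NormedSpace ℝ E] [NormedAddCommGroup H] [InnerProductSpace ℝ H] [CompleteSpace H]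
    {φ : E → H} {Dφ : E →L[ℝ] H} {w : E} (hφ : HasFDerivAt φ Dφ w)
    {F : H → ℝ} (hF : DifferentiableAt ℝ F (φ w)) (v : E) :
    fderiv ℝ (F ∘ φ) w v = ⟪gradient F (φ w), Dφ v⟫ := by
  rw [(hF.hasFDerivAt.comp w hφ).fderiv, ContinuousLinearMap.comp_apply, gradient,
    InnerProductSpace.toDual_symm_apply]

theorem stmt_1_general {H : Type*} [NormedAddCommGroup H] [InnerProductSpace ℝ H] [CompleteSpace H]
    {k : ℕ}
    {φ : EuclideanSpace ℝ (Fin k) → H} {w : EuclideanSpace ℝ (Fin k)}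
    {Dφ : EuclideanSpace ℝ (Fin k) →L[ℝ] H} (hφ : HasFDerivAt φ Dφ w)
    (hinj : Function.Injective Dφ)
    {F : H → ℝ} (hF : DifferentiableAt ℝ F (φ w))
    (b : Fin k → H) (hb : ∀ i, b i = Dφ (EuclideanSpace.single i 1))
    [FiniteDimensional ℝ (Submodule.span ℝ (Set.range b))]
    (g : Matrix (Fin k) (Fin k) ℝ) (hg : ∀ i j, g i j = ⟪b i, b j⟫) :
    Dφ (∑ i, ∑ j, (g⁻¹ i j * fderiv ℝ (F ∘ φ) w (EuclideanSpace.single i 1)) •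
          EuclideanSpace.single j 1)
      = (Submodule.orthogonalProjectionOnto (Submodule.span ℝ (Set.range b)) (gradient F (φ w)) : H) := by
  have hlin : LinearIndependent ℝ b := by
    have hb_eq : b = Dφ ∘ EuclideanSpace.basisFun (Fin k) ℝ := funext fun i ↦ by simp [hb i]
    rw [hb_eq]
    exact (EuclideanSpace.basisFun (Fin k) ℝ).toBasis.linearIndependent.map'
      Dφ.toLinearMap (LinearMap.ker_eq_bot.2 hinj)
  have hgram : g = gram ℝ b := Matrix.ext hg
  rw [coe_orthogonalProjectionOnto_apply, starProjection_span_range_eq_sum_sum_gram_inv hlin,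
    ← hgram]
  simp only [map_sum, map_smul, fderiv_comp_apply_eq_inner_gradient hφ hF, ← hb]

/-- Pullback/natural gradient: if `φ : U → H` is Fréchet differentiable at `w` with injective
differential `Dφ`, `F : H → ℝ` is differentiable at `φ w`, `b i = Dφ eᵢ`, and `g̃` is the
pullback metric (Gram) matrix `g̃ᵢⱼ = ⟪b i, b j⟫`, then `Dφ` applied to the natural gradient
`∑ i j, (g̃⁻¹)ᵢⱼ ∂ᵢ(F ∘ φ)(w) eⱼ` equals the orthogonal projection of the gradient `∇F(φ w)`
onto `span {b₁, …, b_k}`. -/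
theorem stmt_1 {H : Type*} [NormedAddCommGroup H] [InnerProductSpace ℝ H] [CompleteSpace H]
    {k : ℕ} {U : Set (EuclideanSpace ℝ (Fin k))} (hU : IsOpen U)
    {φ : EuclideanSpace ℝ (Fin k) → H} {w : EuclideanSpace ℝ (Fin k)} (hw : w ∈ U)
    {Dφ : EuclideanSpace ℝ (Fin k) →L[ℝ] H} (hφ : HasFDerivAt φ Dφ w)
    (hinj : Function.Injective Dφ)
    {F : H → ℝ} (hF : DifferentiableAt ℝ F (φ w))
    (b : Fin k → H) (hb : ∀ i, b i = Dφ (EuclideanSpace.single i 1))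
    [FiniteDimensional ℝ (Submodule.span ℝ (Set.range b))]
    (g : Matrix (Fin k) (Fin k) ℝ) (hg : ∀ i j, g i j = ⟪b i, b j⟫) :
    Dφ (∑ i, ∑ j, (g⁻¹ i j * fderiv ℝ (F ∘ φ) w (EuclideanSpace.single i 1)) •
          EuclideanSpace.single j 1)
      = (Submodule.orthogonalProjectionOnto (Submodule.span ℝ (Set.range b)) (gradient F (φ w)) : H) :=
  stmt_1_general hφ hinj hF b hb g hg
end

section
/- Let X be a set, n, k ≥ 1 integers, and b₁,…,b_k : X → ℝⁿ linearly independent functions. Define the matrix-valued kernel K(x, x′) = Σ_{ℓ=1}^k b_ℓ(x) b_ℓ(x′)ᵀ (an n×n matrix for each pair of points, acting on v ∈ ℝⁿ by K(x,x′)v = Σ_ℓ (b_ℓ(x′)·v) b_ℓ(x)). Suppose S ⊆ X is a finite set and C₁,…,C_k : S → ℝⁿ are such that b_i(y) = Σ_{x∈S} K(y, x) C_i(x) for all y ∈ X and all i. Then for all i, j ∈ {1,…,k}: Σ_{x∈S} Σ_{x′∈S} C_i(x)ᵀ K(x, x′) C_j(x′) = δ_{ij}. (This says that any basis of a finite-dimensional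 space of ℝⁿ-valued functions is orthonormal for the RKHS inner product of the kernel it generates.) -/
/-!
Pair each `Cᵢ` against the basis: `aᵢℓ = ∑_{x ∈ S} ⟨b_ℓ(x), Cᵢ(x)⟩` (`kernelCoeff`).
The representation hypothesis reads `bᵢ = ∑_ℓ aᵢℓ b_ℓ`, so linear independence forces
`aᵢℓ = δᵢℓ`, while the kernel double sum factors as `∑_ℓ aᵢℓ a_jℓ`.
-/

open scoped RealInnerProductSpace

theorem LinearIndependent.eq_pi_single_of_sum_smul_eq {ι R M : Type*} [Fintype ι]
    [DecidableEq ι] [Semiring R] [AddCommMonoid M] [Module R M] {v : ι → M}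
    (hv : LinearIndependent R v) {a : ι → R} {m : ι} (h : ∑ ℓ, a ℓ • v ℓ = v m) :
    a = Pi.single m 1 :=
  hv.fintypeLinearCombination_injective <| by
    rw [Fintype.linearCombination_apply_single, one_smul, Fintype.linearCombination_apply, h]

section KernelOfBasis

variable {X ι E : Type*} [Fintype ι] [NormedAddCommGroup E] [InnerProductSpace ℝ E]

def kernelCoeff (b : ι → X → E) (S : Finset X) (c : X → E) (ℓ : ι) : ℝ :=
  ∑ x ∈ S, ⟪b ℓ x, c x⟫

theorem sum_kernel_smul_eq_sum_kernelCoeff_smul (b : ι → X → E) (S : Finset X) (c : X → E) :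
    (fun y => ∑ x ∈ S, ∑ ℓ, ⟪b ℓ x, c x⟫ • b ℓ y) = ∑ ℓ, kernelCoeff b S c ℓ • b ℓ := by
  funext y
  simp only [kernelCoeff, Finset.sum_apply, Pi.smul_apply, Finset.sum_smul]
  exact Finset.sum_comm

theorem sum_sum_kernel_eq_sum_kernelCoeff_mul (b : ι → X → E) (S : Finset X) (c d : X → E) :
    ∑ x ∈ S, ∑ x' ∈ S, ∑ ℓ, ⟪c x, b ℓ x⟫ * ⟪b ℓ x', d x'⟫
      = ∑ ℓ, kernelCoeff b S c ℓ * kernelCoeff b S d ℓ := by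
  simp only [kernelCoeff, Finset.sum_mul_sum, real_inner_comm (c _) (b _ _)]
  exact (Finset.sum_congr rfl fun _ _ => Finset.sum_comm).trans Finset.sum_comm

end KernelOfBasis

theorem stmt_6_general {X : Type*} (n k : ℕ)
    (b : Fin k → X → EuclideanSpace ℝ (Fin n))
    (hb : LinearIndependent ℝ b)
    (S : Finset X) (C : Fin k → X → EuclideanSpace ℝ (Fin n))
    (hrep : ∀ i, ∀ y : X, b i y = ∑ x ∈ S, ∑ ℓ, ⟪b ℓ x, C i x⟫ • b ℓ y)
    (i j : Fin k) :
    ∑ x ∈ S, ∑ x' ∈ S, ∑ ℓ, ⟪C i x, b ℓ x⟫ * ⟪b ℓ x', C j x'⟫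
      = if i = j then (1 : ℝ) else 0 := by
  have hcoeff : ∀ m, kernelCoeff b S (C m) = Pi.single m 1 := fun m =>
    hb.eq_pi_single_of_sum_smul_eq <| by
      rw [← sum_kernel_smul_eq_sum_kernelCoeff_smul]
      exact (funext (hrep m)).symm
  rw [sum_sum_kernel_eq_sum_kernelCoeff_mul, hcoeff, hcoeff]
  simp [Pi.single_apply, eq_comm]

/-- Automatic orthonormality of a basis for its induced kernel: if `b₁, …, b_k : X → ℝⁿ` are
linearly independent, `K(x,x′) = ∑ ℓ, b_ℓ(x) b_ℓ(x′)ᵀ`, and the coefficient functions `Cᵢ`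
represent `bᵢ` as `bᵢ(y) = ∑_{x ∈ S} K(y,x) Cᵢ(x)`, then the RKHS inner products
`∑_{x,x′∈S} Cᵢ(x)ᵀ K(x,x′) C_j(x′)` equal the Kronecker delta `δᵢⱼ`. -/
theorem stmt_6 {X : Type*} (n k : ℕ) (hn : 1 ≤ n) (hk : 1 ≤ k)
    (b : Fin k → X → EuclideanSpace ℝ (Fin n))
    (hb : LinearIndependent ℝ b)
    (S : Finset X) (C : Fin k → X → EuclideanSpace ℝ (Fin n))
    (hrep : ∀ i, ∀ y : X, b i y = ∑ x ∈ S, ∑ ℓ, ⟪b ℓ x, C i x⟫ • b ℓ y)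
    (i j : Fin k) :
    ∑ x ∈ S, ∑ x' ∈ S, ∑ ℓ, ⟪C i x, b ℓ x⟫ * ⟪b ℓ x', C j x'⟫
      = if i = j then (1 : ℝ) else 0 :=
  stmt_6_general n k b hb S C hrep i j
end

section
/- Let n ≥ 2 be an integer, s > n+1 a real number, and x ∈ ℝⁿ with x ≠ 0. Then ∫_{ℝⁿ} cos(x·ξ) (1+‖ξ‖²)^{−s/2} dξ = (∫_{−∞}^{∞} cos(‖x‖ t) (1+t²)^{−(s−n+1)/2} dt) · (∫_0^∞ (1+r²)^{−s/2} r^{n−2} dr) · (2π^{(n−1)/2} / Γ((n−1)/2)). That is, the n-dimensional Fourier integral of (1+‖ξ‖²)^{−s/2} factors into a one-dimensional Fourier integral, a radial integral, and the volume of the unit sphere S^{n−2}. -/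
/-!
A reflection (which preserves volume) moves `x` to `‖x‖ e₀`. Splitting `ℝⁿ = ℝ × ℝⁿ⁻¹` and
integrating over `ℝⁿ⁻¹` first, the substitution `z = √(1 + t²) w` turns the inner integral into
`(1 + t²)^((n - 1 - s)/2) ∫ (1 + ‖w‖²)^(-s/2) dw`. Polar coordinates on `ℝⁿ⁻¹` write this last
integral as the radial integral times `(n - 1) vol(B^{n-1}) = 2π^((n-1)/2)/Γ((n-1)/2)`.
-/

open MeasureTheory Set Real Module

open scoped RealInnerProductSpace

section InnerProductSpace

variable {V F : Type*} [NormedAddCommGroup V] [InnerProductSpace ℝ V] [FiniteDimensional ℝ V]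
  [MeasurableSpace V] [BorelSpace V] [NormedAddCommGroup F] [NormedSpace ℝ F]

theorem integral_comp_inner_norm_eq_of_norm_eq_one (f : ℝ → ℝ → F) (x : V) {e : V}
    (he : ‖e‖ = 1) :
    ∫ ξ, f ⟪x, ξ⟫ ‖ξ‖ = ∫ ξ, f (‖x‖ * ⟪e, ξ⟫) ‖ξ‖ := by
  set R := (ℝ ∙ (‖x‖ • e - x))ᗮ.reflection
  have hR : R (‖x‖ • e) = x := Submodule.reflection_sub (by simp [norm_smul, he])
  rw [← R.measurePreserving.integral_comp R.toHomeomorph.measurableEmbedding]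
  congr 1 with ξ
  conv_lhs => rw [← hR]
  rw [LinearIsometryEquiv.inner_map_map, LinearIsometryEquiv.norm_map, real_inner_smul_left]

theorem integral_rpow_add_norm_sq {c : ℝ} (hc : 0 < c) (s : ℝ) :
    ∫ z : V, (c + ‖z‖ ^ 2) ^ (-(s / 2))
      = c ^ ((finrank ℝ V - s) / 2) * ∫ z : V, (1 + ‖z‖ ^ 2) ^ (-(s / 2)) := by
  have hscale :=
    Measure.integral_comp_smul volume (fun z : V => (c + ‖z‖ ^ 2) ^ (-(s / 2))) √c
  have hpoint : ∀ z : V, (c + ‖√c • z‖ ^ 2) ^ (-(s / 2))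
      = c ^ (-(s / 2)) * (1 + ‖z‖ ^ 2) ^ (-(s / 2)) := fun z => by
    rw [norm_smul, mul_pow, norm_of_nonneg (sqrt_nonneg c), sq_sqrt hc.le, ← mul_one_add,
      mul_rpow hc.le (by positivity)]
  simp only [hpoint, integral_const_mul, smul_eq_mul] at hscale
  rw [abs_of_pos (by positivity)] at hscale
  have hsqrt : √c ^ finrank ℝ V = c ^ ((finrank ℝ V : ℝ) / 2) := by
    rw [sqrt_eq_rpow, ← rpow_natCast, ← rpow_mul hc.le]; ring_nf
  rw [hsqrt] at hscale
  rw [sub_div, sub_eq_add_neg, rpow_add hc, mul_assoc, hscale, ← mul_assoc,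
    mul_inv_cancel₀ (by positivity), one_mul]

theorem finrank_mul_volume_real_ball_zero_one [Nontrivial V] :
    finrank ℝ V * volume.real (Metric.ball (0 : V) 1)
      = 2 * π ^ ((finrank ℝ V : ℝ) / 2) / Gamma (finrank ℝ V / 2) := by
  have hd : (0 : ℝ) < finrank ℝ V := by exact_mod_cast finrank_pos
  have hΓ : 0 < Gamma (finrank ℝ V / 2) := Gamma_pos_of_pos (by positivity)
  rw [measureReal_def, InnerProductSpace.volume_ball, ENNReal.ofReal_one, one_pow, one_mul,
    ENNReal.toReal_ofReal (by positivity), Gamma_add_one (by positivity), sqrt_eq_rpow,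
    ← rpow_natCast, ← rpow_mul pi_pos.le]
  field_simp

theorem integral_fun_norm_eq_integral_Ioi_mul [Nontrivial V] (f : ℝ → ℝ) :
    ∫ z : V, f ‖z‖ = (∫ r in Ioi (0 : ℝ), f r * r ^ (finrank ℝ V - 1))
      * (2 * π ^ ((finrank ℝ V : ℝ) / 2) / Gamma (finrank ℝ V / 2)) := by
  rw [integral_fun_norm_addHaar, ← finrank_mul_volume_real_ball_zero_one, nsmul_eq_mul,
    smul_eq_mul]
  simp only [smul_eq_mul, mul_comm (f _)]
  ring

end InnerProductSpace

namespace EuclideanSpace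

noncomputable def consMeasurableEquiv (k : ℕ) :
    ℝ × EuclideanSpace ℝ (Fin k) ≃ᵐ EuclideanSpace ℝ (Fin (k + 1)) :=
  ((MeasurableEquiv.refl ℝ).prodCongr (MeasurableEquiv.toLp 2 (Fin k → ℝ)).symm).trans
    ((MeasurableEquiv.piFinSuccAbove (fun _ => ℝ) 0).symm.trans (MeasurableEquiv.toLp 2 _))

theorem measurePreserving_consMeasurableEquiv (k : ℕ) :
    MeasurePreserving (consMeasurableEquiv k) :=
  ((MeasurePreserving.id volume).prod (volume_preserving_symm_measurableEquiv_toLp _)).trans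
    ((volume_preserving_piFinSuccAbove _ 0).symm.trans
      (volume_preserving_symm_measurableEquiv_toLp _).symm)

@[simp]
theorem consMeasurableEquiv_apply_zero {k : ℕ} (p : ℝ × EuclideanSpace ℝ (Fin k)) :
    consMeasurableEquiv k p 0 = p.1 := by
  simp [consMeasurableEquiv, MeasurableEquiv.piFinSuccAbove, MeasurableEquiv.prodCongr]

@[simp]
theorem norm_consMeasurableEquiv_sq {k : ℕ} (p : ℝ × EuclideanSpace ℝ (Fin k)) :
    ‖consMeasurableEquiv k p‖ ^ 2 = p.1 ^ 2 + ‖p.2‖ ^ 2 := by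
  simp [EuclideanSpace.norm_sq_eq, Fin.sum_univ_succ, consMeasurableEquiv,
    MeasurableEquiv.piFinSuccAbove, MeasurableEquiv.prodCongr]

theorem integral_comp_apply_zero_norm_sq {F : Type*} [NormedAddCommGroup F] [NormedSpace ℝ F]
    {k : ℕ} (g : ℝ → ℝ → F)
    (hg : Integrable fun η : EuclideanSpace ℝ (Fin (k + 1)) => g (η 0) (‖η‖ ^ 2)) :
    ∫ η : EuclideanSpace ℝ (Fin (k + 1)), g (η 0) (‖η‖ ^ 2)
      = ∫ t : ℝ, ∫ z : EuclideanSpace ℝ (Fin k), g t (t ^ 2 + ‖z‖ ^ 2) := by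
  have he := measurePreserving_consMeasurableEquiv k
  rw [← he.integral_comp']
  simp only [consMeasurableEquiv_apply_zero, norm_consMeasurableEquiv_sq]
  refine integral_prod (fun p => g p.1 (p.1 ^ 2 + ‖p.2‖ ^ 2)) ?_
  rw [← Measure.volume_eq_prod]
  simpa [Function.comp_def] using
    (he.integrable_comp_emb (consMeasurableEquiv k).measurableEmbedding).2 hg

end EuclideanSpace

theorem stmt_9_general (n : ℕ) (hn : 2 ≤ n) (s : ℝ) (hs : (n : ℝ) + 1 < s)
    (x : EuclideanSpace ℝ (Fin n)) :
    ∫ ξ : EuclideanSpace ℝ (Fin n), Real.cos ⟪x, ξ⟫ * (1 + ‖ξ‖ ^ 2) ^ (-(s / 2))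
      = (∫ t : ℝ, Real.cos (‖x‖ * t) * (1 + t ^ 2) ^ (-((s - n + 1) / 2)))
        * (∫ r in Set.Ioi (0 : ℝ), (1 + r ^ 2) ^ (-(s / 2)) * r ^ (n - 2))
        * (2 * Real.pi ^ (((n : ℝ) - 1) / 2) / Real.Gamma (((n : ℝ) - 1) / 2)) := by
  obtain ⟨m, rfl⟩ : ∃ m, n = m + 2 := ⟨n - 2, by omega⟩
  have hint : Integrable fun η : EuclideanSpace ℝ (Fin (m + 2)) =>
      cos (‖x‖ * η 0) * (1 + ‖η‖ ^ 2) ^ (-(s / 2)) := by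
    refine Integrable.bdd_mul (c := 1) ?_ (by fun_prop)
      (ae_of_all _ fun η => by simpa using abs_cos_le_one _)
    simpa [neg_div] using integrable_rpow_neg_one_add_norm_sq
      (E := EuclideanSpace ℝ (Fin (m + 2))) (r := s) (by push_cast at hs ⊢; simp; linarith)
  calc ∫ ξ, cos ⟪x, ξ⟫ * (1 + ‖ξ‖ ^ 2) ^ (-(s / 2))
      = ∫ η : EuclideanSpace ℝ (Fin (m + 2)), cos (‖x‖ * η 0) * (1 + ‖η‖ ^ 2) ^ (-(s / 2)) := by
        rw [integral_comp_inner_norm_eq_of_norm_eq_one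
          (fun a r => cos a * (1 + r ^ 2) ^ (-(s / 2))) x (e := EuclideanSpace.single 0 1) (by simp)]
        simp [EuclideanSpace.inner_single_left]
    _ = ∫ t, ∫ z : EuclideanSpace ℝ (Fin (m + 1)),
          cos (‖x‖ * t) * (1 + (t ^ 2 + ‖z‖ ^ 2)) ^ (-(s / 2)) :=
        EuclideanSpace.integral_comp_apply_zero_norm_sq
          (fun t q => cos (‖x‖ * t) * (1 + q) ^ (-(s / 2))) hint
    _ = ∫ t, cos (‖x‖ * t) * (1 + t ^ 2) ^ (-((s - (m + 2 : ℕ) + 1) / 2))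
          * ∫ z : EuclideanSpace ℝ (Fin (m + 1)), (1 + ‖z‖ ^ 2) ^ (-(s / 2)) := by
        congr 1 with t
        simp only [← add_assoc]
        rw [integral_const_mul, integral_rpow_add_norm_sq (by positivity),
          finrank_euclideanSpace_fin, mul_assoc]
        push_cast
        ring_nf
    _ = _ := by
        rw [integral_mul_const,
          integral_fun_norm_eq_integral_Ioi_mul (fun r => (1 + r ^ 2) ^ (-(s / 2)))]
        simp only [finrank_euclideanSpace_fin, Nat.add_sub_cancel]
        push_cast
        ring_nf

/-- Factorization of the `n`-dimensional Fourier integral of `(1+‖ξ‖²)^{-s/2}` into a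
one-dimensional Fourier integral, a radial integral, and the volume
`2π^{(n-1)/2}/Γ((n-1)/2)` of the unit sphere `S^{n-2}`. -/
theorem stmt_9 (n : ℕ) (hn : 2 ≤ n) (s : ℝ) (hs : (n : ℝ) + 1 < s)
    (x : EuclideanSpace ℝ (Fin n)) (hx : x ≠ 0) :
    ∫ ξ : EuclideanSpace ℝ (Fin n), Real.cos ⟪x, ξ⟫ * (1 + ‖ξ‖ ^ 2) ^ (-(s / 2))
      = (∫ t : ℝ, Real.cos (‖x‖ * t) * (1 + t ^ 2) ^ (-((s - n + 1) / 2)))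
        * (∫ r in Set.Ioi (0 : ℝ), (1 + r ^ 2) ^ (-(s / 2)) * r ^ (n - 2))
        * (2 * Real.pi ^ (((n : ℝ) - 1) / 2) / Real.Gamma (((n : ℝ) - 1) / 2)) :=
  stmt_9_general n hn s hs x
end

section
/- Let f : ℝⁿ → ℝ be differentiable with L-Lipschitz Euclidean gradient (‖∇f(x) − ∇f(y)‖ ≤ L‖x−y‖ for all x, y), and let g assign to each x ∈ ℝⁿ a symmetric positive definite matrix g(x) with ‖u‖² ≤ C · uᵀ g(x) u for all x, u (𝔼-compatibility with constant C > 0). Then the natural gradient descent update x′ = x − (1/(CL)) g(x)⁻¹ ∇f(x) satisfies f(x) − f(x′) ≥ (1/(2CL)) ∇f(x)ᵀ g(x)⁻¹ ∇f(x). -/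
open Matrix
open scoped RealInnerProductSpace

/-!
By the descent lemma, a function with `L`-Lipschitz gradient satisfies
`f (x + v) ≤ f x + ⟪∇f x, v⟫ + L/2 ‖v‖²`. For the natural gradient `d = g(x)⁻¹ ∇f(x)` one has
`⟪∇f x, d⟫ = ∇f(x)ᵀ g(x)⁻¹ ∇f(x)` and `dᵀ g(x) d` is the same number, so compatibility gives
`‖d‖² ≤ C ⟪∇f x, d⟫`. Along any such direction the step `v = -(1/(CL)) d` minimises the
quadratic bound, which then decreases `f` by at least `⟪∇f x, d⟫ / (2CL)`.
-/

section DescentLemma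

variable {E : Type*} [NormedAddCommGroup E] [InnerProductSpace ℝ E] [CompleteSpace E]

theorem HasGradientAt.hasDerivAt_comp_add_smul {f : E → ℝ} {f' x v : E} {t : ℝ}
    (h : HasGradientAt f f' (x + t • v)) :
    HasDerivAt (fun s : ℝ => f (x + s • v)) ⟪f', v⟫ t := by
  have hline : HasDerivAt (fun s : ℝ => x + s • v) v t := by
    simpa using ((hasDerivAt_id t).smul_const v).const_add x
  simpa [Function.comp_def] using h.hasFDerivAt.comp_hasDerivAt t hline

theorem image_add_le_of_lipschitz_gradient {f : E → ℝ} (hf : Differentiable ℝ f) {L : ℝ}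
    (hLip : ∀ x y : E, ‖gradient f x - gradient f y‖ ≤ L * ‖x - y‖) (x v : E) :
    f (x + v) ≤ f x + ⟪gradient f x, v⟫ + L / 2 * ‖v‖ ^ 2 := by
  set φ : ℝ → ℝ := fun t => f (x + t • v)
  set B : ℝ → ℝ := fun t => f x + t * ⟪gradient f x, v⟫ + L / 2 * t ^ 2 * ‖v‖ ^ 2
  have hφ (t : ℝ) : HasDerivAt φ ⟪gradient f (x + t • v), v⟫ t :=
    (hf _).hasGradientAt.hasDerivAt_comp_add_smul
  have hB (t : ℝ) : HasDerivAt B (⟪gradient f x, v⟫ + L * t * ‖v‖ ^ 2) t := by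
    refine ((((hasDerivAt_id' t).mul_const _).const_add _).fun_add
      (((hasDerivAt_pow 2 t).const_mul (L / 2)).mul_const _)).congr_deriv ?_
    simp only [Nat.cast_ofNat, one_mul]
    ring
  have bound (t : ℝ) (ht : t ∈ Set.Ico (0 : ℝ) 1) :
      ⟪gradient f (x + t • v), v⟫ ≤ ⟪gradient f x, v⟫ + L * t * ‖v‖ ^ 2 := by
    have : ⟪gradient f (x + t • v) - gradient f x, v⟫ ≤ L * t * ‖v‖ ^ 2 :=
      calc ⟪gradient f (x + t • v) - gradient f x, v⟫
          ≤ ‖gradient f (x + t • v) - gradient f x‖ * ‖v‖ := real_inner_le_norm _ _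
        _ ≤ L * ‖(x + t • v) - x‖ * ‖v‖ := by gcongr; exact hLip _ _
        _ = L * t * ‖v‖ ^ 2 := by
          rw [add_sub_cancel_left, norm_smul, Real.norm_of_nonneg ht.1]
          ring
    rwa [inner_sub_left, sub_le_iff_le_add'] at this
  have key := image_le_of_deriv_right_le_deriv_boundary (a := 0) (b := 1)
    (HasDerivAt.continuousOn fun t _ => hφ t) (fun t _ => (hφ t).hasDerivWithinAt)
    (by simp [φ, B]) (HasDerivAt.continuousOn fun t _ => hB t)
    (fun t _ => (hB t).hasDerivWithinAt) bound (Set.right_mem_Icc.mpr zero_le_one)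
  simpa [φ, B] using key

theorem image_sub_smul_le_of_norm_sq_le_mul_inner {f : E → ℝ} (hf : Differentiable ℝ f) {L C : ℝ}
    (hLip : ∀ x y : E, ‖gradient f x - gradient f y‖ ≤ L * ‖x - y‖) (hL : 0 < L) (hC : 0 < C)
    {x d : E} (hd : ‖d‖ ^ 2 ≤ C * ⟪gradient f x, d⟫) :
    f (x - (1 / (C * L)) • d) ≤ f x - 1 / (2 * C * L) * ⟪gradient f x, d⟫ := by
  have h := image_add_le_of_lipschitz_gradient hf hLip x (-(1 / (C * L)) • d)
  simp only [neg_smul, ← sub_eq_add_neg, inner_neg_right, real_inner_smul_right, norm_neg,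
    norm_smul, mul_pow, Real.norm_eq_abs, sq_abs] at h
  calc f (x - (1 / (C * L)) • d)
      ≤ f x + -(1 / (C * L) * ⟪gradient f x, d⟫) + L / 2 * ((1 / (C * L)) ^ 2 * ‖d‖ ^ 2) := h
    _ ≤ f x + -(1 / (C * L) * ⟪gradient f x, d⟫)
        + L / 2 * ((1 / (C * L)) ^ 2 * (C * ⟪gradient f x, d⟫)) := by gcongr
    _ = f x - 1 / (2 * C * L) * ⟪gradient f x, d⟫ := by field_simp; ring

end DescentLemma

theorem stmt_14_general (n : ℕ) (f : EuclideanSpace ℝ (Fin n) → ℝ) (hf : Differentiable ℝ f)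
    (L : ℝ) (hL : 0 < L)
    (hLip : ∀ x y : EuclideanSpace ℝ (Fin n),
      ‖gradient f x - gradient f y‖ ≤ L * ‖x - y‖)
    (g : EuclideanSpace ℝ (Fin n) → Matrix (Fin n) (Fin n) ℝ)
    (hgpos : ∀ x, (g x).PosDef)
    (C : ℝ) (hC : 0 < C)
    (hcompat : ∀ (x u : EuclideanSpace ℝ (Fin n)), ‖u‖ ^ 2 ≤ C * (u ⬝ᵥ (g x).mulVec u))
    (x : EuclideanSpace ℝ (Fin n)) :
    let gr : EuclideanSpace ℝ (Fin n) := gradient f x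
    f x - f (x - (1 / (C * L)) • (show EuclideanSpace ℝ (Fin n) from WithLp.toLp 2 ((g x)⁻¹.mulVec gr)))
      ≥ (1 / (2 * C * L)) * (gr ⬝ᵥ (g x)⁻¹.mulVec gr) := by
  intro gr
  have hg : IsUnit (g x).det := (g x).isUnit_iff_isUnit_det.mp (hgpos x).isUnit
  set d : EuclideanSpace ℝ (Fin n) := WithLp.toLp 2 ((g x)⁻¹.mulVec gr)
  have hinner : ⟪gr, d⟫ = gr ⬝ᵥ (g x)⁻¹.mulVec gr := dotProduct_comm _ _
  have hd : ‖d‖ ^ 2 ≤ C * ⟪gr, d⟫ := by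
    simpa [hinner, d, mulVec_mulVec, mul_nonsing_inv _ hg, dotProduct_comm] using hcompat x d
  rw [← hinner]
  linarith [image_sub_smul_le_of_norm_sq_le_mul_inner hf hLip hL hC hd]

/-- Natural gradient descent progress guarantee: under `L`-Lipschitzness of the Euclidean
gradient and 𝔼-compatibility of the metric `g` with constant `C`, the update
`x′ = x - (1/(CL)) g(x)⁻¹ ∇f(x)` satisfies
`f(x) - f(x′) ≥ (1/(2CL)) ∇f(x)ᵀ g(x)⁻¹ ∇f(x)`. -/
theorem stmt_14 (n : ℕ) (f : EuclideanSpace ℝ (Fin n) → ℝ) (hf : Differentiable ℝ f)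
    (L : ℝ) (hL : 0 < L)
    (hLip : ∀ x y : EuclideanSpace ℝ (Fin n),
      ‖gradient f x - gradient f y‖ ≤ L * ‖x - y‖)
    (g : EuclideanSpace ℝ (Fin n) → Matrix (Fin n) (Fin n) ℝ)
    (hgsym : ∀ x, (g x).IsSymm) (hgpos : ∀ x, (g x).PosDef)
    (C : ℝ) (hC : 0 < C)
    (hcompat : ∀ (x u : EuclideanSpace ℝ (Fin n)), ‖u‖ ^ 2 ≤ C * (u ⬝ᵥ (g x).mulVec u))
    (x : EuclideanSpace ℝ (Fin n)) :
    let gr : EuclideanSpace ℝ (Fin n) := gradient f x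
    f x - f (x - (1 / (C * L)) • (show EuclideanSpace ℝ (Fin n) from WithLp.toLp 2 ((g x)⁻¹.mulVec gr)))
      ≥ (1 / (2 * C * L)) * (gr ⬝ᵥ (g x)⁻¹.mulVec gr) :=
  stmt_14_general n f hf L hL hLip g hgpos C hC hcompat x
end

section
/- Let H be a real Hilbert space, U, V ⊆ ℝᵏ open sets, α : V → U a C¹ diffeomorphism, and φ : U → H continuously Fréchet differentiable. For u ∈ U define the pullback metric matrix G_φ(u) with entries G_φ(u)_{ij} = ⟨∂_iφ(u), ∂_jφ(u)⟩_H, and for x ∈ V define G_{φ∘α}(x) with entries ⟨∂_i(φ∘α)(x), ∂_j(φ∘α)(x)⟩_H. Then ∫_V √(det G_{φ∘α}(x)) dx = ∫_U √(det G_φ(u)) du, as an equality of (possibly infinite) Lebesgue integrals of nonnegative functions. Consequently, the ε-flatness of a loss function near a minimum, defined as the pullback-metric volume ∫_S √(det G_φ) of a maximal connected set S on which the loss exceeds its minimum by less than ε, is independent of the choice of coordinates on the parameter space. -/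
/-!
By the chain rule the Gram matrix of `φ ∘ α` is `Dαᵀ G_φ(α) Dα`, so
`√(det G_{φ∘α}) = |det Dα| · √(det G_φ) ∘ α`, and the change of variables formula for the
injective differentiable map `α` turns the left integral into the right one.
-/

open scoped RealInnerProductSpace
open MeasureTheory

namespace Matrix

variable {ι κ E H : Type*} [Fintype ι] [NormedAddCommGroup H] [InnerProductSpace ℝ H]

theorem gram_sum_smul (v : ι → H) (A : Matrix ι κ ℝ) :
    gram ℝ (fun j => ∑ i, A i j • v i) = Aᵀ * gram ℝ v * A := by
  ext p q
  simp only [gram_apply, sum_inner, inner_sum, real_inner_smul_left, real_inner_smul_right,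
    mul_apply, transpose_apply, Finset.sum_mul]
  exact Finset.sum_congr rfl fun i _ => Finset.sum_congr rfl fun j _ => by
    rw [real_inner_comm]; ring

variable [DecidableEq ι] [AddCommGroup E] [Module ℝ E]

theorem gram_comp_linearMap (b : Module.Basis ι ℝ E) (f : E →ₗ[ℝ] H) (T : E →ₗ[ℝ] E) :
    gram ℝ (fun j => f (T (b j))) =
      (LinearMap.toMatrix b b T)ᵀ * gram ℝ (fun i => f (b i)) * LinearMap.toMatrix b b T := by
  rw [← gram_sum_smul]
  congr 1
  ext j
  simp only [LinearMap.toMatrix_apply, ← map_smul, ← map_sum, b.sum_repr]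

theorem sqrt_det_gram_comp_linearMap (b : Module.Basis ι ℝ E) (f : E →ₗ[ℝ] H)
    (T : E →ₗ[ℝ] E) :
    √(gram ℝ (fun j => f (T (b j)))).det =
      |LinearMap.det T| * √(gram ℝ (fun i => f (b i))).det := by
  rw [gram_comp_linearMap, det_mul, det_mul, det_transpose, LinearMap.det_toMatrix,
    mul_right_comm, ← sq, Real.sqrt_mul (sq_nonneg _), Real.sqrt_sq_eq_abs]

end Matrix

section PullbackVolume

variable {ι E H : Type*} [Fintype ι] [DecidableEq ι] [NormedAddCommGroup E] [NormedSpace ℝ E]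
  [NormedAddCommGroup H] [InnerProductSpace ℝ H]

/-- The density `√(det G_φ)` of the pullback metric `φ*⟨·,·⟩_H`, in the coordinates of `b`. -/
noncomputable def pullbackVolumeDensity (b : Module.Basis ι ℝ E) (φ : E → H) (x : E) : ℝ :=
  √(Matrix.gram ℝ fun i => fderiv ℝ φ x (b i)).det

theorem pullbackVolumeDensity_comp (b : Module.Basis ι ℝ E) {φ : E → H} {α : E → E} {x : E}
    (hφ : DifferentiableAt ℝ φ (α x)) (hα : DifferentiableAt ℝ α x) :
    pullbackVolumeDensity b (φ ∘ α) x =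
      |(fderiv ℝ α x).det| * pullbackVolumeDensity b φ (α x) := by
  rw [pullbackVolumeDensity, fderiv_comp x hφ hα]
  exact Matrix.sqrt_det_gram_comp_linearMap b (fderiv ℝ φ (α x)).toLinearMap
    (fderiv ℝ α x).toLinearMap

theorem lintegral_pullbackVolumeDensity_comp [FiniteDimensional ℝ E] [MeasurableSpace E]
    [BorelSpace E] (μ : Measure E) [μ.IsAddHaarMeasure] (b : Module.Basis ι ℝ E)
    {φ : E → H} {α : E → E} {s : Set E} (hs : MeasurableSet s) (hinj : s.InjOn α)
    (hα : ∀ x ∈ s, DifferentiableAt ℝ α x) (hφ : ∀ u ∈ α '' s, DifferentiableAt ℝ φ u) :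
    ∫⁻ x in s, ENNReal.ofReal (pullbackVolumeDensity b (φ ∘ α) x) ∂μ =
      ∫⁻ u in α '' s, ENNReal.ofReal (pullbackVolumeDensity b φ u) ∂μ := by
  rw [lintegral_image_eq_lintegral_abs_det_fderiv_mul μ hs
    (fun x hx => (hα x hx).hasFDerivAt.hasFDerivWithinAt) hinj]
  refine setLIntegral_congr_fun hs fun x hx => ?_
  rw [pullbackVolumeDensity_comp b (hφ _ (Set.mem_image_of_mem α hx)) (hα x hx),
    ENNReal.ofReal_mul (abs_nonneg _)]

end PullbackVolume

theorem stmt_18_general {H : Type*} [NormedAddCommGroup H] [InnerProductSpace ℝ H]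
    (k : ℕ) (U V : Set (EuclideanSpace ℝ (Fin k))) (hU : IsOpen U) (hV : IsOpen V)
    (α : EuclideanSpace ℝ (Fin k) → EuclideanSpace ℝ (Fin k))
    (hbij : Set.BijOn α V U) (hα : ContDiffOn ℝ 1 α V)
    (φ : EuclideanSpace ℝ (Fin k) → H) (hφ : ContDiffOn ℝ 1 φ U) :
    ∫⁻ x in V, ENNReal.ofReal (Real.sqrt (Matrix.det (Matrix.of fun i j =>
        ⟪fderiv ℝ (φ ∘ α) x (EuclideanSpace.single i 1),
          fderiv ℝ (φ ∘ α) x (EuclideanSpace.single j 1)⟫)))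
      = ∫⁻ u in U, ENNReal.ofReal (Real.sqrt (Matrix.det (Matrix.of fun i j =>
        ⟪fderiv ℝ φ u (EuclideanSpace.single i 1),
          fderiv ℝ φ u (EuclideanSpace.single j 1)⟫))) := by
  have hdensity (ψ : EuclideanSpace ℝ (Fin k) → H) (x) : pullbackVolumeDensity
      (EuclideanSpace.basisFun (Fin k) ℝ).toBasis ψ x =
        √(Matrix.of fun i j => ⟪fderiv ℝ ψ x (EuclideanSpace.single i 1),
          fderiv ℝ ψ x (EuclideanSpace.single j 1)⟫).det := by
    simp [pullbackVolumeDensity, Matrix.gram]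
  simp only [← hdensity]
  rw [← hbij.image_eq]
  exact lintegral_pullbackVolumeDensity_comp volume _ hV.measurableSet hbij.injOn
    (fun x hx => (hα.contDiffAt (hV.mem_nhds hx)).differentiableAt_one)
    (fun u hu => (hφ.contDiffAt (hU.mem_nhds (hbij.image_eq ▸ hu))).differentiableAt_one)

/-- Coordinate invariance of the pullback-metric volume (hence of ε-flatness): for a C¹
diffeomorphism `α : V → U` (with C¹ inverse `β`) and a C¹ map `φ : U → H`, the volume of
the pullback metric computed in the `V`-coordinates of `φ ∘ α` equals the volume computed
in the `U`-coordinates of `φ`: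
`∫_V √(det G_{φ∘α}) = ∫_U √(det G_φ)`, as (possibly infinite) Lebesgue integrals. -/
theorem stmt_18 {H : Type*} [NormedAddCommGroup H] [InnerProductSpace ℝ H]
    (k : ℕ) (U V : Set (EuclideanSpace ℝ (Fin k))) (hU : IsOpen U) (hV : IsOpen V)
    (α : EuclideanSpace ℝ (Fin k) → EuclideanSpace ℝ (Fin k))
    (hbij : Set.BijOn α V U) (hα : ContDiffOn ℝ 1 α V)
    (β : EuclideanSpace ℝ (Fin k) → EuclideanSpace ℝ (Fin k))
    (hβinv : ∀ x ∈ V, β (α x) = x) (hβ : ContDiffOn ℝ 1 β U)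
    (φ : EuclideanSpace ℝ (Fin k) → H) (hφ : ContDiffOn ℝ 1 φ U) :
    ∫⁻ x in V, ENNReal.ofReal (Real.sqrt (Matrix.det (Matrix.of fun i j =>
        ⟪fderiv ℝ (φ ∘ α) x (EuclideanSpace.single i 1),
          fderiv ℝ (φ ∘ α) x (EuclideanSpace.single j 1)⟫)))
      = ∫⁻ u in U, ENNReal.ofReal (Real.sqrt (Matrix.det (Matrix.of fun i j =>
        ⟪fderiv ℝ φ u (EuclideanSpace.single i 1),
          fderiv ℝ φ u (EuclideanSpace.single j 1)⟫))) :=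
  stmt_18_general k U V hU hV α hbij hα φ hφ
end
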